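/- arXiv:2111.02406 — 2 statements merged into one kernel-verified Lean document; each statement's English description precedes it below -/
import Mathlib

section
/- The vector ξ = [μ(L₁ − L₂) − (E₁ r₁ − E₂ r₂)] × (r₁ − r₂), built from the Keplerian integrals of two position–velocity pairs, has no dependence on μ/|r₁| or μ/|r₂|: it equals (1/2)(|v₂|² − |v₁|²) r₁ × r₂ − (v₁·r₁) v₁ × (r₁ − r₂) + (v₂·r₂) v₂ × (r₁ − r₂). -/
noncomputable section

/-- Euclidean dot product on ℝ³. -/
def dot3 (a b : Fin 3 → ℝ) : ℝ := a 0 * b 0 + a 1 * b 1 + a 2 * b 2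

/-- Cross product on ℝ³. -/
def cross3 (a b : Fin 3 → ℝ) : Fin 3 → ℝ :=
  ![a 1 * b 2 - a 2 * b 1, a 2 * b 0 - a 0 * b 2, a 0 * b 1 - a 1 * b 0]

/-- Euclidean norm on ℝ³. -/
def norm3 (a : Fin 3 → ℝ) : ℝ := Real.sqrt (dot3 a a)

/-- The vector ξ = [μ(L₁ − L₂) − (E₁ r₁ − E₂ r₂)] × (r₁ − r₂) does not depend
on μ/|r₁|, μ/|r₂|: it equals
(1/2)(|v₂|² − |v₁|²) r₁ × r₂ − (v₁·r₁) v₁ × (r₁ − r₂) + (v₂·r₂) v₂ × (r₁ − r₂). -/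
theorem xi_no_mu_over_r (μ : ℝ) (hμ : 0 < μ)
    (r₁ r₂ v₁ v₂ : Fin 3 → ℝ) (hr₁ : r₁ ≠ 0) (hr₂ : r₂ ≠ 0)
    (E₁ E₂ : ℝ) (μL₁ μL₂ : Fin 3 → ℝ)
    (hE₁ : E₁ = (norm3 v₁) ^ 2 / 2 - μ / norm3 r₁)
    (hE₂ : E₂ = (norm3 v₂) ^ 2 / 2 - μ / norm3 r₂)
    (hL₁ : μL₁ = (dot3 v₁ v₁ - μ / norm3 r₁) • r₁ - (dot3 v₁ r₁) • v₁)
    (hL₂ : μL₂ = (dot3 v₂ v₂ - μ / norm3 r₂) • r₂ - (dot3 v₂ r₂) • v₂) :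
    cross3 ((μL₁ - μL₂) - (E₁ • r₁ - E₂ • r₂)) (r₁ - r₂)
      = ((dot3 v₂ v₂ - dot3 v₁ v₁) / 2) • cross3 r₁ r₂
        - (dot3 v₁ r₁) • cross3 v₁ (r₁ - r₂)
        + (dot3 v₂ r₂) • cross3 v₂ (r₁ - r₂) := by
  have hv1 : (norm3 v₁) ^ 2 = dot3 v₁ v₁ := Real.sq_sqrt (by unfold dot3; nlinarith [sq_nonneg (v₁ 0), sq_nonneg (v₁ 1), sq_nonneg (v₁ 2), sq_nonneg (v₂ 0), sq_nonneg (v₂ 1), sq_nonneg (v₂ 2)])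
  have hv2 : (norm3 v₂) ^ 2 = dot3 v₂ v₂ := Real.sq_sqrt (by unfold dot3; nlinarith [sq_nonneg (v₁ 0), sq_nonneg (v₁ 1), sq_nonneg (v₁ 2), sq_nonneg (v₂ 0), sq_nonneg (v₂ 1), sq_nonneg (v₂ 2)])
  subst hE₁ hE₂ hL₁ hL₂
  rw [hv1, hv2]
  funext i
  fin_cases i <;>
    simp [cross3, dot3, Pi.sub_apply, Pi.add_apply, Pi.smul_apply, smul_eq_mul] <;>
    ring
end
end

section
/- Suppose D₁ × D₂ · D₃ ≠ 0 and c₁, c₂, c₃ ∈ ℝ³ satisfy (c₁−c₂)·(D₁×D₂) = 0, (c₁−c₂)·(D₁×(D₁×D₂)) = 0, (c₂−c₃)·(D₂×D₃) = 0, (c₂−c₃)·(D₂×(D₂×D₃)) = 0, (c₃−c₁)·(D₃×D₁) = 0, (c₃−c₁)·(D₃×(D₃×D₁)) = 0. Then c₁ = c₂ = c₃. -/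
noncomputable section

lemma dot3_self_ne_zero_of (A r : Fin 3 → ℝ) (h : dot3 A r ≠ 0) : dot3 A A ≠ 0 := by
  intro h0
  apply h
  have h00 : A 0 = 0 ∧ A 1 = 0 ∧ A 2 = 0 := by
    simp only [dot3] at h0
    refine ⟨?_, ?_, ?_⟩ <;> nlinarith [sq_nonneg (A 0), sq_nonneg (A 1), sq_nonneg (A 2)]
  simp [dot3, h00.1, h00.2.1, h00.2.2]

lemma key_lemma (p q x : Fin 3 → ℝ)
    (hA : dot3 (cross3 p q) (cross3 p q) ≠ 0)
    (h1 : dot3 x (cross3 p q) = 0)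
    (h2 : dot3 x (cross3 p (cross3 p q)) = 0) :
    ∀ k, cross3 x p k = 0 := by
  intro k
  have hid : dot3 (cross3 p q) (cross3 p q) * cross3 x p k
      = cross3 p q k * dot3 x (cross3 p (cross3 p q))
        - cross3 p (cross3 p q) k * dot3 x (cross3 p q) := by
    fin_cases k <;> simp [dot3, cross3] <;> ring
  rw [h1, h2] at hid
  simp only [mul_zero, zero_mul, sub_zero] at hid
  rcases mul_eq_zero.mp hid with h | h
  · exact absurd h hA
  · exact h

/-- If D₁ × D₂ · D₃ ≠ 0, then the six projection equations of the differences
of the angular momenta imply c₁ = c₂ = c₃. -/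
theorem six_projections_imply_equal (D₁ D₂ D₃ c₁ c₂ c₃ : Fin 3 → ℝ)
    (hD : dot3 (cross3 D₁ D₂) D₃ ≠ 0)
    (h12a : dot3 (c₁ - c₂) (cross3 D₁ D₂) = 0)
    (h12b : dot3 (c₁ - c₂) (cross3 D₁ (cross3 D₁ D₂)) = 0)
    (h23a : dot3 (c₂ - c₃) (cross3 D₂ D₃) = 0)
    (h23b : dot3 (c₂ - c₃) (cross3 D₂ (cross3 D₂ D₃)) = 0)
    (h31a : dot3 (c₃ - c₁) (cross3 D₃ D₁) = 0)
    (h31b : dot3 (c₃ - c₁) (cross3 D₃ (cross3 D₃ D₁)) = 0) :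
    c₁ = c₂ ∧ c₂ = c₃ ∧ c₃ = c₁ := by
  have hD23 : dot3 (cross3 D₂ D₃) D₁ ≠ 0 := by
    intro h; apply hD; rw [← h]; simp [dot3, cross3]; ring
  have hD31 : dot3 (cross3 D₃ D₁) D₂ ≠ 0 := by
    intro h; apply hD; rw [← h]; simp [dot3, cross3]; ring
  have hA12 := dot3_self_ne_zero_of (cross3 D₁ D₂) D₃ hD
  have hA23 := dot3_self_ne_zero_of (cross3 D₂ D₃) D₁ hD23
  have hA31 := dot3_self_ne_zero_of (cross3 D₃ D₁) D₂ hD31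
  have Hv := key_lemma D₁ D₂ (c₁ - c₂) hA12 h12a h12b
  have Hw := key_lemma D₂ D₃ (c₂ - c₃) hA23 h23a h23b
  have Hu := key_lemma D₃ D₁ (c₃ - c₁) hA31 h31a h31b
  have Hv0 := Hv 0; have Hv1 := Hv 1; have Hv2 := Hv 2
  have Hw0 := Hw 0; have Hw1 := Hw 1; have Hw2 := Hw 2
  have Hu0 := Hu 0; have Hu1 := Hu 1; have Hu2 := Hu 2
  simp only [cross3, Pi.sub_apply, Matrix.cons_val_zero, Matrix.cons_val_one,
    Matrix.head_cons, Matrix.cons_val_two, Matrix.tail_cons, Fin.isValue] at Hv0 Hv1 Hv2 Hw0 Hw1 Hw2 Hu0 Hu1 Hu2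
  have ht : dot3 (cross3 D₁ D₂) D₃ ≠ 0 := hD
  have hteq : dot3 (cross3 D₁ D₂) D₃
      = D₁ 0 * (D₂ 1 * D₃ 2 - D₂ 2 * D₃ 1) + D₁ 1 * (D₂ 2 * D₃ 0 - D₂ 0 * D₃ 2)
        + D₁ 2 * (D₂ 0 * D₃ 1 - D₂ 1 * D₃ 0) := by
    simp [dot3, cross3]; ring
  have hv0 : c₁ 0 = c₂ 0 := by
    have hz : (c₁ 0 - c₂ 0) * dot3 (cross3 D₁ D₂) D₃ = 0 := by
      rw [hteq]
      linear_combination (-(D₁ 0 * D₃ 0)) * Hw0 + (-(D₁ 0 * D₃ 1)) * Hw1 + (-(D₁ 0 * D₃ 2)) * Hw2 + (D₁ 0 * D₂ 0) * Hu0 + (D₁ 0 * D₂ 1) * Hu1 + (D₁ 0 * D₂ 2) * Hu2 - (D₂ 0 * D₃ 1 - D₂ 1 * D₃ 0) * Hv1 + (D₂ 2 * D₃ 0 - D₂ 0 * D₃ 2) * Hv2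
    rcases mul_eq_zero.mp hz with h | h
    · exact sub_eq_zero.mp h
    · exact absurd h hD
  have hv1 : c₁ 1 = c₂ 1 := by
    have hz : (c₁ 1 - c₂ 1) * dot3 (cross3 D₁ D₂) D₃ = 0 := by
      rw [hteq]
      linear_combination (-(D₁ 1 * D₃ 0)) * Hw0 + (-(D₁ 1 * D₃ 1)) * Hw1 + (-(D₁ 1 * D₃ 2)) * Hw2 + (D₁ 1 * D₂ 0) * Hu0 + (D₁ 1 * D₂ 1) * Hu1 + (D₁ 1 * D₂ 2) * Hu2 - (D₂ 1 * D₃ 2 - D₂ 2 * D₃ 1) * Hv2 + (D₂ 0 * D₃ 1 - D₂ 1 * D₃ 0) * Hv0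
    rcases mul_eq_zero.mp hz with h | h
    · exact sub_eq_zero.mp h
    · exact absurd h hD
  have hv2 : c₁ 2 = c₂ 2 := by
    have hz : (c₁ 2 - c₂ 2) * dot3 (cross3 D₁ D₂) D₃ = 0 := by
      rw [hteq]
      linear_combination (-(D₁ 2 * D₃ 0)) * Hw0 + (-(D₁ 2 * D₃ 1)) * Hw1 + (-(D₁ 2 * D₃ 2)) * Hw2 + (D₁ 2 * D₂ 0) * Hu0 + (D₁ 2 * D₂ 1) * Hu1 + (D₁ 2 * D₂ 2) * Hu2 - (D₂ 2 * D₃ 0 - D₂ 0 * D₃ 2) * Hv0 + (D₂ 1 * D₃ 2 - D₂ 2 * D₃ 1) * Hv1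
    rcases mul_eq_zero.mp hz with h | h
    · exact sub_eq_zero.mp h
    · exact absurd h hD
  have hw0 : c₂ 0 = c₃ 0 := by
    have hz : (c₂ 0 - c₃ 0) * dot3 (cross3 D₁ D₂) D₃ = 0 := by
      rw [hteq]
      linear_combination (D₂ 0 * D₃ 0) * Hv0 + (D₂ 0 * D₃ 1) * Hv1 + (D₂ 0 * D₃ 2) * Hv2 + (-(D₂ 0 * D₁ 0)) * Hu0 + (-(D₂ 0 * D₁ 1)) * Hu1 + (-(D₂ 0 * D₁ 2)) * Hu2 - (D₃ 0 * D₁ 1 - D₃ 1 * D₁ 0) * Hw1 + (D₃ 2 * D₁ 0 - D₃ 0 * D₁ 2) * Hw2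
    rcases mul_eq_zero.mp hz with h | h
    · exact sub_eq_zero.mp h
    · exact absurd h hD
  have hw1 : c₂ 1 = c₃ 1 := by
    have hz : (c₂ 1 - c₃ 1) * dot3 (cross3 D₁ D₂) D₃ = 0 := by
      rw [hteq]
      linear_combination (D₂ 1 * D₃ 0) * Hv0 + (D₂ 1 * D₃ 1) * Hv1 + (D₂ 1 * D₃ 2) * Hv2 + (-(D₂ 1 * D₁ 0)) * Hu0 + (-(D₂ 1 * D₁ 1)) * Hu1 + (-(D₂ 1 * D₁ 2)) * Hu2 - (D₃ 1 * D₁ 2 - D₃ 2 * D₁ 1) * Hw2 + (D₃ 0 * D₁ 1 - D₃ 1 * D₁ 0) * Hw0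
    rcases mul_eq_zero.mp hz with h | h
    · exact sub_eq_zero.mp h
    · exact absurd h hD
  have hw2 : c₂ 2 = c₃ 2 := by
    have hz : (c₂ 2 - c₃ 2) * dot3 (cross3 D₁ D₂) D₃ = 0 := by
      rw [hteq]
      linear_combination (D₂ 2 * D₃ 0) * Hv0 + (D₂ 2 * D₃ 1) * Hv1 + (D₂ 2 * D₃ 2) * Hv2 + (-(D₂ 2 * D₁ 0)) * Hu0 + (-(D₂ 2 * D₁ 1)) * Hu1 + (-(D₂ 2 * D₁ 2)) * Hu2 - (D₃ 2 * D₁ 0 - D₃ 0 * D₁ 2) * Hw0 + (D₃ 1 * D₁ 2 - D₃ 2 * D₁ 1) * Hw1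
    rcases mul_eq_zero.mp hz with h | h
    · exact sub_eq_zero.mp h
    · exact absurd h hD
  have e1 : c₁ = c₂ := by
    funext k; fin_cases k
    · exact hv0
    · exact hv1
    · exact hv2
  have e2 : c₂ = c₃ := by
    funext k; fin_cases k
    · exact hw0
    · exact hw1
    · exact hw2
  exact ⟨e1, e2, (e1.trans e2).symm⟩
end
end
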